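/- Let λ, μ : A → k be two one-dimensional representations of a finite-dimensional symmetric Frobenius algebra A with basis {e_U} and dual basis {e_{U^∨}}. If Σ_U λ(e_U)·μ(e_{U^∨}) ≠ 0, then λ = μ. -/

import Mathlib

/-!
Expanding `a * e U` in the basis `e` and `e (dual V) * a` in the basis `e ∘ dual` (a basis
because `dual` is forced to be injective), the identities `B (a * x) y = B x (y * a)`
(invariance plus symmetry) give the Casimir identity
`∑ U, f (a * e U) * g (e (dual U)) = ∑ U, f (e U) * g (e (dual U) * a)`
for all linear functionals `f, g`. For algebra homomorphisms `λ, μ` it reads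
`λ a * S = S * μ a`, where `S = ∑ U, λ (e U) * μ (e (dual U))`, so `λ a = μ a` once `S ≠ 0`.
-/

section Pairing

variable {R M N I : Type*} [CommRing R] [AddCommGroup M] [Module R M]
  [AddCommGroup N] [Module R N]

theorem Module.Basis.exists_coe_eq_comp (b : Module.Basis I R M) {σ : I → I}
    (hσ : Function.Bijective σ) : ∃ b' : Module.Basis I R M, ⇑b' = b ∘ σ :=
  ⟨b.reindex (Equiv.ofBijective σ hσ).symm, by ext; simp⟩

variable [DecidableEq I]

theorem Module.Basis.repr_eq_of_pairing_eq_ite (b : Module.Basis I R M)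
    (B : M →ₗ[R] N →ₗ[R] R) (c : I → N)
    (h : ∀ i j, B (b i) (c j) = if i = j then 1 else 0) (x : M) (i : I) :
    b.repr x i = B x (c i) := by
  have : b.coord i = B.flip (c i) := b.ext fun j => by
    simp [h, Finsupp.single_apply, eq_comm]
  exact LinearMap.congr_fun this x

theorem Module.Basis.sum_pairing_mul_eq [Fintype I] (b : Module.Basis I R M)
    (B : M →ₗ[R] N →ₗ[R] R) (c : I → N)
    (h : ∀ i j, B (b i) (c j) = if i = j then 1 else 0) (φ : M →ₗ[R] R) (x : M) :
    ∑ i, B x (c i) * φ (b i) = φ x := by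
  conv_rhs => rw [← b.sum_repr x]
  simp [b.repr_eq_of_pairing_eq_ite B c h]

theorem injective_of_pairing_eq_ite [Nontrivial R] (B : M →ₗ[R] N →ₗ[R] R) (b : I → M)
    (c : I → N) (h : ∀ i j, B (b i) (c j) = if i = j then 1 else 0) :
    Function.Injective c := by
  intro i j hij
  by_contra hne
  simpa [← hij, h i i, hne] using h i j

end Pairing

section Casimir

variable {k A I : Type*} [CommRing k] [Ring A] [Algebra k A] {B : A →ₗ[k] A →ₗ[k] k}

theorem pairing_mul_left_eq_mul_right (hsymm : ∀ a b : A, B a b = B b a)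
    (hinv : ∀ a b c : A, B (a * b) c = B a (b * c)) (a x y : A) :
    B (a * x) y = B x (y * a) := by
  rw [hsymm, ← hinv, hsymm]

variable [Nontrivial k] [Fintype I] [DecidableEq I]

theorem casimir_sum_mul_left_eq_mul_right (hsymm : ∀ a b : A, B a b = B b a)
    (hinv : ∀ a b c : A, B (a * b) c = B a (b * c))
    (e : Module.Basis I k A) (dual : I → I)
    (hdualbasis : ∀ U V : I, B (e U) (e (dual V)) = if U = V then 1 else 0)
    (f g : A →ₗ[k] k) (a : A) :
    ∑ U, f (a * e U) * g (e (dual U)) = ∑ U, f (e U) * g (e (dual U) * a) := by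
  have hdual : Function.Bijective dual := Finite.injective_iff_bijective.mp
    (injective_of_pairing_eq_ite B e (e ∘ dual) hdualbasis).of_comp
  obtain ⟨e', he'⟩ := e.exists_coe_eq_comp hdual
  have hdualbasis' : ∀ U V, B.flip (e' U) (e V) = if U = V then 1 else 0 := fun U V => by
    simp [he', hdualbasis, eq_comm]
  calc ∑ U, f (a * e U) * g (e (dual U))
      = ∑ U, (∑ V, B (e U) (e (dual V) * a) * f (e V)) * g (e (dual U)) := by
        refine Finset.sum_congr rfl fun U _ => ?_
        rw [← e.sum_pairing_mul_eq B (e ∘ dual) hdualbasis f]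
        simp only [Function.comp_apply, pairing_mul_left_eq_mul_right hsymm hinv]
    _ = ∑ V, f (e V) * ∑ U, B (e U) (e (dual V) * a) * g (e' U) := by
        simp only [he', Function.comp_apply, Finset.sum_mul, Finset.mul_sum]
        rw [Finset.sum_comm]
        exact Finset.sum_congr rfl fun _ _ => Finset.sum_congr rfl fun _ _ => by ring
    _ = ∑ V, f (e V) * g (e (dual V) * a) := by
        simp_rw [← LinearMap.flip_apply (f := B), e'.sum_pairing_mul_eq B.flip e hdualbasis']

end Casimir

theorem characters_eq_of_frobenius_sum_ne_zero_general
    (k A : Type*) [Field k] [Ring A] [Algebra k A]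
    -- the symmetric Frobenius pairing
    (B : A →ₗ[k] A →ₗ[k] k)
    (hsymm : ∀ a b : A, B a b = B b a)
    (hinv : ∀ a b c : A, B (a * b) c = B a (b * c))
    -- a basis `e` whose `B`-dual basis is `e ∘ dual`
    (I : Type*) [Fintype I] [DecidableEq I]
    (e : Module.Basis I k A) (dual : I → I)
    (hdualbasis : ∀ U V : I, B (e U) (e (dual V)) = if U = V then 1 else 0)
    -- two one-dimensional representations of `A`
    (lam mu : A →ₐ[k] k)
    (hne : (∑ U : I, lam (e U) * mu (e (dual U))) ≠ 0) :
    lam = mu := by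
  refine AlgHom.ext fun a => mul_right_cancel₀ hne ?_
  have casimir := casimir_sum_mul_left_eq_mul_right hsymm hinv e dual hdualbasis
    lam.toLinearMap mu.toLinearMap a
  simp only [AlgHom.toLinearMap_apply, map_mul] at casimir
  calc lam a * ∑ U, lam (e U) * mu (e (dual U))
      = ∑ U, lam a * lam (e U) * mu (e (dual U)) := by simp only [Finset.mul_sum, mul_assoc]
    _ = ∑ U, lam (e U) * (mu (e (dual U)) * mu a) := casimir
    _ = mu a * ∑ U, lam (e U) * mu (e (dual U)) := by
        rw [Finset.mul_sum]
        exact Finset.sum_congr rfl fun _ _ => by ring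

/-- Let `λ, μ : A → k` be two one-dimensional representations of a
finite-dimensional symmetric Frobenius algebra `A` with basis `{e_U}` and dual basis
`{e_{U^∨}}`.  If `∑_U λ(e_U) · μ(e_{U^∨}) ≠ 0`, then `λ = μ`. -/
theorem characters_eq_of_frobenius_sum_ne_zero
    (k A : Type*) [Field k] [Ring A] [Algebra k A] [FiniteDimensional k A]
    -- the symmetric Frobenius pairing
    (B : A →ₗ[k] A →ₗ[k] k)
    (hsymm : ∀ a b : A, B a b = B b a)
    (hinv : ∀ a b c : A, B (a * b) c = B a (b * c))
    (hnondeg : ∀ a : A, (∀ b : A, B a b = 0) → a = 0)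
    -- a basis `e` whose `B`-dual basis is `e ∘ dual`
    (I : Type*) [Fintype I] [DecidableEq I]
    (e : Module.Basis I k A) (dual : I → I)
    (hdualbasis : ∀ U V : I, B (e U) (e (dual V)) = if U = V then 1 else 0)
    -- two one-dimensional representations of `A`
    (lam mu : A →ₐ[k] k)
    (hne : (∑ U : I, lam (e U) * mu (e (dual U))) ≠ 0) :
    lam = mu :=
  characters_eq_of_frobenius_sum_ne_zero_general k A B hsymm hinv I e dual hdualbasis lam mu hne
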